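/- arXiv:1810.05542 — 2 statements merged into one kernel-verified Lean document; each statement's English description precedes it below -/
import Mathlib

section
/- Simulation is preserved under system composition: let Σ₁, Σ₁', Σ₂, Σ₂' be systems in driving variable form with the same external space W such that Σ₁ ≼ Σ₁' and Σ₂ ≼ Σ₂'. Then Σ₁ ∘ Σ₂ ≼ Σ₁' ∘ Σ₂'. -/
/-- A linear system in driving variable form `ẋ = A x + G d`, `w = C x`, `0 = H x`. -/
structure DVSystem (X W D Y : Type)
    [AddCommGroup X] [Module ℝ X] [AddCommGroup W] [Module ℝ W]
    [AddCommGroup D] [Module ℝ D] [AddCommGroup Y] [Module ℝ Y] where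
  A : X →ₗ[ℝ] X
  G : D →ₗ[ℝ] X
  C : X →ₗ[ℝ] W
  H : X →ₗ[ℝ] Y

namespace DVSystem

section basic

variable {X W D Y : Type}
  [AddCommGroup X] [Module ℝ X] [AddCommGroup W] [Module ℝ W]
  [AddCommGroup D] [Module ℝ D] [AddCommGroup Y] [Module ℝ Y]

/-- A subspace `U` is consistent-admissible if `A U ⊆ U + im G` and `U ⊆ ker H`. -/
def Admissible (P : DVSystem X W D Y) (U : Submodule ℝ X) : Prop :=
  U.map P.A ≤ U ⊔ LinearMap.range P.G ∧ U ≤ LinearMap.ker P.H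

/-- The consistent subspace `V*`: the largest consistent-admissible subspace. -/
def V (P : DVSystem X W D Y) : Submodule ℝ X :=
  sSup {U | P.Admissible U}

end basic

section sim

variable {W : Type} [AddCommGroup W] [Module ℝ W]
variable {X₁ D₁ Y₁ : Type} [AddCommGroup X₁] [Module ℝ X₁]
  [AddCommGroup D₁] [Module ℝ D₁] [AddCommGroup Y₁] [Module ℝ Y₁]
variable {X₂ D₂ Y₂ : Type} [AddCommGroup X₂] [Module ℝ X₂]
  [AddCommGroup D₂] [Module ℝ D₂] [AddCommGroup Y₂] [Module ℝ Y₂]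

/-- Items (i)-(ii) of the (algebraic) definition of a simulation relation. -/
def SimConds (P₁ : DVSystem X₁ W D₁ Y₁) (P₂ : DVSystem X₂ W D₂ Y₂)
    (S : Submodule ℝ (X₁ × X₂)) : Prop :=
  ∀ x₁ x₂, (x₁, x₂) ∈ S →
    (∀ d₁ : D₁, P₁.A x₁ + P₁.G d₁ ∈ P₁.V →
      ∃ d₂ : D₂, P₂.A x₂ + P₂.G d₂ ∈ P₂.V ∧
        (P₁.A x₁ + P₁.G d₁, P₂.A x₂ + P₂.G d₂) ∈ S) ∧
    P₁.C x₁ = P₂.C x₂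

/-- `S` is a simulation relation of `P₁` by `P₂`. -/
def IsSimRel (P₁ : DVSystem X₁ W D₁ Y₁) (P₂ : DVSystem X₂ W D₂ Y₂)
    (S : Submodule ℝ (X₁ × X₂)) : Prop :=
  S.map (LinearMap.fst ℝ X₁ X₂) ≤ P₁.V ∧ S.map (LinearMap.snd ℝ X₁ X₂) ≤ P₂.V ∧
    SimConds P₁ P₂ S

/-- `S` is a full simulation relation of `P₁` by `P₂`: in addition `π₁(S) = V₁*`. -/
def IsFullSimRel (P₁ : DVSystem X₁ W D₁ Y₁) (P₂ : DVSystem X₂ W D₂ Y₂)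
    (S : Submodule ℝ (X₁ × X₂)) : Prop :=
  IsSimRel P₁ P₂ S ∧ S.map (LinearMap.fst ℝ X₁ X₂) = P₁.V

/-- `P₁ ≼ P₂`: `P₁` is simulated by `P₂`. -/
def Simulates (P₁ : DVSystem X₁ W D₁ Y₁) (P₂ : DVSystem X₂ W D₂ Y₂) : Prop :=
  ∃ S : Submodule ℝ (X₁ × X₂), IsFullSimRel P₁ P₂ S

/-- The composition `P₁ ∘ P₂` obtained by sharing the external variable `w₁ = w₂`. -/
noncomputable def comp (P₁ : DVSystem X₁ W D₁ Y₁) (P₂ : DVSystem X₂ W D₂ Y₂) :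
    DVSystem (X₁ × X₂) W (D₁ × D₂) (Y₁ × Y₂ × W) where
  A := P₁.A.prodMap P₂.A
  G := P₁.G.prodMap P₂.G
  C := (1/2 : ℝ) • (P₁.C ∘ₗ LinearMap.fst ℝ X₁ X₂ + P₂.C ∘ₗ LinearMap.snd ℝ X₁ X₂)
  H := (P₁.H ∘ₗ LinearMap.fst ℝ X₁ X₂).prod
    ((P₂.H ∘ₗ LinearMap.snd ℝ X₁ X₂).prod
      (P₁.C ∘ₗ LinearMap.fst ℝ X₁ X₂ - P₂.C ∘ₗ LinearMap.snd ℝ X₁ X₂))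

end sim

section relcomp

variable {X₁ X₂ X₃ : Type} [AddCommGroup X₁] [Module ℝ X₁]
  [AddCommGroup X₂] [Module ℝ X₂] [AddCommGroup X₃] [Module ℝ X₃]

/-- Composition of linear relations:
`{(x₁, x₃) | ∃ x₂, (x₁, x₂) ∈ S₁₂ ∧ (x₂, x₃) ∈ S₂₃}`. -/
def relComp (S₁₂ : Submodule ℝ (X₁ × X₂)) (S₂₃ : Submodule ℝ (X₂ × X₃)) :
    Submodule ℝ (X₁ × X₃) where
  carrier := {p | ∃ x₂, (p.1, x₂) ∈ S₁₂ ∧ (x₂, p.2) ∈ S₂₃}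
  zero_mem' := ⟨0, by exact S₁₂.zero_mem, by exact S₂₃.zero_mem⟩
  add_mem' := by
    rintro a b ⟨y, hy1, hy2⟩ ⟨z, hz1, hz2⟩
    exact ⟨y + z, S₁₂.add_mem hy1 hz1, S₂₃.add_mem hy2 hz2⟩
  smul_mem' := by
    rintro c a ⟨y, h1, h2⟩
    exact ⟨c • y, S₁₂.smul_mem c h1, S₂₃.smul_mem c h2⟩

/-- The pairing `{(x, (x₁, x₂)) | (x, x₁) ∈ S₁ ∧ (x, x₂) ∈ S₂}` of two relations. -/
def pairRel (S₁ : Submodule ℝ (X₁ × X₂)) (S₂ : Submodule ℝ (X₁ × X₃)) :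
    Submodule ℝ (X₁ × X₂ × X₃) where
  carrier := {p | (p.1, p.2.1) ∈ S₁ ∧ (p.1, p.2.2) ∈ S₂}
  zero_mem' := ⟨by exact S₁.zero_mem, by exact S₂.zero_mem⟩
  add_mem' := by
    rintro a b ⟨ha1, ha2⟩ ⟨hb1, hb2⟩
    exact ⟨S₁.add_mem ha1 hb1, S₂.add_mem ha2 hb2⟩
  smul_mem' := by
    rintro c a ⟨h1, h2⟩
    exact ⟨S₁.smul_mem c h1, S₂.smul_mem c h2⟩

end relcomp

section contract

variable {W : Type} [AddCommGroup W] [Module ℝ W]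
variable {X D Y Xa Da Ya Xg Dg Yg : Type}
  [AddCommGroup X] [Module ℝ X] [AddCommGroup D] [Module ℝ D]
  [AddCommGroup Y] [Module ℝ Y]
  [AddCommGroup Xa] [Module ℝ Xa] [AddCommGroup Da] [Module ℝ Da]
  [AddCommGroup Ya] [Module ℝ Ya]
  [AddCommGroup Xg] [Module ℝ Xg] [AddCommGroup Dg] [Module ℝ Dg]
  [AddCommGroup Yg] [Module ℝ Yg]

/-- `Sys` implements the contract `(Ass, Gar)` if `E ∘ Sys ≼ Gar` for every
compatible environment `E`, i.e., every environment with `E ≼ Ass`. -/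
def Implements (Sys : DVSystem X W D Y)
    (Ass : DVSystem Xa W Da Ya) (Gar : DVSystem Xg W Dg Yg) : Prop :=
  ∀ (Xe De Ye : Type) [AddCommGroup Xe] [Module ℝ Xe] [FiniteDimensional ℝ Xe]
    [AddCommGroup De] [Module ℝ De] [FiniteDimensional ℝ De]
    [AddCommGroup Ye] [Module ℝ Ye] [FiniteDimensional ℝ Ye]
    (E : DVSystem Xe W De Ye),
    Simulates E Ass → Simulates (comp E Sys) Gar

end contract

section refine

variable {W : Type} [AddCommGroup W] [Module ℝ W]
variable {Xa Da Ya Xg Dg Yg Xa' Da' Ya' Xg' Dg' Yg' : Type}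
  [AddCommGroup Xa] [Module ℝ Xa] [AddCommGroup Da] [Module ℝ Da]
  [AddCommGroup Ya] [Module ℝ Ya]
  [AddCommGroup Xg] [Module ℝ Xg] [AddCommGroup Dg] [Module ℝ Dg]
  [AddCommGroup Yg] [Module ℝ Yg]
  [AddCommGroup Xa'] [Module ℝ Xa'] [AddCommGroup Da'] [Module ℝ Da']
  [AddCommGroup Ya'] [Module ℝ Ya']
  [AddCommGroup Xg'] [Module ℝ Xg'] [AddCommGroup Dg'] [Module ℝ Dg']
  [AddCommGroup Yg'] [Module ℝ Yg']

/-- The contract `(Ass', Gar')` refines the contract `(Ass, Gar)`: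
`Ass ≼ Ass'` and `Ass ∘ Gar' ≼ Gar`. -/
def Refines (Ass' : DVSystem Xa' W Da' Ya') (Gar' : DVSystem Xg' W Dg' Yg')
    (Ass : DVSystem Xa W Da Ya) (Gar : DVSystem Xg W Dg Yg) : Prop :=
  Simulates Ass Ass' ∧ Simulates (comp Ass Gar') Gar

end refine

end DVSystem

/-!
Relate `(x₁, x₂)` to `(x₁', x₂')` when `(x₁, x₁') ∈ S₁`, `(x₂, x₂') ∈ S₂` and `(x₁, x₂) ∈ V∘*`.
A step of `Σ₁ ∘ Σ₂` that stays in `V∘*` splits into steps of `Σ₁` and `Σ₂` that stay in `V₁*` and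
`V₂*` (the projections of `V∘*` are admissible), and `S₁`, `S₂` match these. The matching states
satisfy the interconnection constraint `C₁'x₁' = C₁x₁ = C₂x₂ = C₂'x₂'`, which is what makes the
second projection of the relation admissible for `Σ₁' ∘ Σ₂'`, so the matched steps stay in `V∘'*`.
Fullness is inherited from `S₁` and `S₂` because `V∘* ⊆ V₁* × V₂*`.
-/

namespace DVSystem

section consistent

variable {X W D Y : Type}
  [AddCommGroup X] [Module ℝ X] [AddCommGroup W] [Module ℝ W]
  [AddCommGroup D] [Module ℝ D] [AddCommGroup Y] [Module ℝ Y]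

lemma admissible_V (P : DVSystem X W D Y) : P.Admissible P.V := by
  refine ⟨?_, sSup_le fun U hU => hU.2⟩
  rw [V, sSup_eq_iSup', Submodule.map_iSup]
  exact iSup_le fun U => U.2.1.trans <| sup_le_sup_right
    (le_iSup (fun U : {U // P.Admissible U} => (U : Submodule ℝ X)) U) _

lemma le_V (P : DVSystem X W D Y) {U : Submodule ℝ X} (h : P.Admissible U) : U ≤ P.V :=
  le_sSup h

lemma H_eq_zero_of_mem_V (P : DVSystem X W D Y) {x : X} (hx : x ∈ P.V) : P.H x = 0 :=
  (admissible_V P).2 hx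

lemma exists_A_add_G_mem_V (P : DVSystem X W D Y) {x : X} (hx : x ∈ P.V) :
    ∃ d, P.A x + P.G d ∈ P.V := by
  obtain ⟨v, hv, _, ⟨d, rfl⟩, hvd⟩ :=
    Submodule.mem_sup.1 ((admissible_V P).1 (Submodule.mem_map_of_mem hx))
  exact ⟨-d, by rwa [map_neg, ← hvd, add_neg_cancel_right]⟩

end consistent

section morphism

variable {X W D Y X' W' D' Y' : Type}
  [AddCommGroup X] [Module ℝ X] [AddCommGroup W] [Module ℝ W]
  [AddCommGroup D] [Module ℝ D] [AddCommGroup Y] [Module ℝ Y]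
  [AddCommGroup X'] [Module ℝ X'] [AddCommGroup W'] [Module ℝ W']
  [AddCommGroup D'] [Module ℝ D'] [AddCommGroup Y'] [Module ℝ Y']

lemma map_V_le_V (P : DVSystem X W D Y) (Q : DVSystem X' W' D' Y') (f : X →ₗ[ℝ] X')
    (g : D →ₗ[ℝ] D') (hA : f ∘ₗ P.A = Q.A ∘ₗ f) (hG : f ∘ₗ P.G = Q.G ∘ₗ g)
    (hH : ∀ x ∈ P.V, Q.H (f x) = 0) : P.V.map f ≤ Q.V := by
  refine Q.le_V ⟨?_, fun _ ⟨x, hx, hfx⟩ => hfx ▸ hH x hx⟩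
  calc (P.V.map f).map Q.A = (P.V.map P.A).map f := by
        rw [← Submodule.map_comp, ← hA, Submodule.map_comp]
    _ ≤ (P.V ⊔ LinearMap.range P.G).map f := Submodule.map_mono (admissible_V P).1
    _ = P.V.map f ⊔ LinearMap.range (Q.G ∘ₗ g) := by
        rw [Submodule.map_sup, ← hG, LinearMap.range_comp]
    _ ≤ P.V.map f ⊔ LinearMap.range Q.G := sup_le_sup_left (LinearMap.range_comp_le_range _ _) _

end morphism

section comp

variable {W : Type} [AddCommGroup W] [Module ℝ W]
variable {X₁ D₁ Y₁ : Type} [AddCommGroup X₁] [Module ℝ X₁]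
  [AddCommGroup D₁] [Module ℝ D₁] [AddCommGroup Y₁] [Module ℝ Y₁]
variable {X₂ D₂ Y₂ : Type} [AddCommGroup X₂] [Module ℝ X₂]
  [AddCommGroup D₂] [Module ℝ D₂] [AddCommGroup Y₂] [Module ℝ Y₂]
variable (P₁ : DVSystem X₁ W D₁ Y₁) (P₂ : DVSystem X₂ W D₂ Y₂)

@[simp] lemma comp_C_apply (x : X₁ × X₂) :
    (comp P₁ P₂).C x = (1/2 : ℝ) • (P₁.C x.1 + P₂.C x.2) := rfl

@[simp] lemma comp_H_apply (x : X₁ × X₂) :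
    (comp P₁ P₂).H x = (P₁.H x.1, P₂.H x.2, P₁.C x.1 - P₂.C x.2) := rfl

lemma V_comp_le_prod : (comp P₁ P₂).V ≤ P₁.V.prod P₂.V := by
  intro x hx
  refine ⟨map_V_le_V (comp P₁ P₂) P₁ (LinearMap.fst ℝ X₁ X₂) (LinearMap.fst ℝ D₁ D₂) rfl rfl
      ?_ ⟨x, hx, rfl⟩,
    map_V_le_V (comp P₁ P₂) P₂ (LinearMap.snd ℝ X₁ X₂) (LinearMap.snd ℝ D₁ D₂) rfl rfl
      ?_ ⟨x, hx, rfl⟩⟩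
  · exact fun y hy => congrArg Prod.fst (H_eq_zero_of_mem_V _ hy)
  · exact fun y hy => congrArg (fun h => h.2.1) (H_eq_zero_of_mem_V _ hy)

lemma C_fst_eq_C_snd_of_mem_V_comp {x : X₁ × X₂} (hx : x ∈ (comp P₁ P₂).V) :
    P₁.C x.1 = P₂.C x.2 :=
  sub_eq_zero.1 (congrArg (fun h => h.2.2) (H_eq_zero_of_mem_V _ hx))

end comp

section simulation

variable {W : Type} [AddCommGroup W] [Module ℝ W]
variable {X₁ D₁ Y₁ : Type} [AddCommGroup X₁] [Module ℝ X₁]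
  [AddCommGroup D₁] [Module ℝ D₁] [AddCommGroup Y₁] [Module ℝ Y₁]
variable {X₂ D₂ Y₂ : Type} [AddCommGroup X₂] [Module ℝ X₂]
  [AddCommGroup D₂] [Module ℝ D₂] [AddCommGroup Y₂] [Module ℝ Y₂]

/-- The requirement `A₂x₂ + G₂d₂ ∈ V₂*` of a simulation relation comes for free: under these
hypotheses the second projection of `S` is admissible for `P₂`, hence contained in `V₂*`. -/
lemma isSimRel_of_exists_step (P₁ : DVSystem X₁ W D₁ Y₁) (P₂ : DVSystem X₂ W D₂ Y₂)
    {S : Submodule ℝ (X₁ × X₂)} (hfst : S.map (LinearMap.fst ℝ X₁ X₂) ≤ P₁.V)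
    (hH : ∀ p ∈ S, P₂.H p.2 = 0)
    (hstep : ∀ x₁ x₂, (x₁, x₂) ∈ S → ∀ d₁, P₁.A x₁ + P₁.G d₁ ∈ P₁.V →
      ∃ d₂, (P₁.A x₁ + P₁.G d₁, P₂.A x₂ + P₂.G d₂) ∈ S)
    (hC : ∀ p ∈ S, P₁.C p.1 = P₂.C p.2) : IsSimRel P₁ P₂ S := by
  have hsnd : S.map (LinearMap.snd ℝ X₁ X₂) ≤ P₂.V := by
    refine P₂.le_V ⟨?_, fun _ ⟨p, hp, hpx⟩ => hpx ▸ hH p hp⟩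
    rintro _ ⟨_, ⟨⟨x₁, x₂⟩, hx, rfl⟩, rfl⟩
    obtain ⟨d₁, hd₁⟩ := P₁.exists_A_add_G_mem_V (hfst ⟨_, hx, rfl⟩)
    obtain ⟨d₂, hd₂⟩ := hstep x₁ x₂ hx d₁ hd₁
    refine Submodule.mem_sup.2 ⟨_, ⟨_, hd₂, rfl⟩, P₂.G (-d₂), ⟨-d₂, rfl⟩, ?_⟩
    simp
  refine ⟨hfst, hsnd, fun x₁ x₂ hx => ⟨fun d₁ hd₁ => ?_, hC _ hx⟩⟩
  obtain ⟨d₂, hd₂⟩ := hstep x₁ x₂ hx d₁ hd₁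
  exact ⟨d₂, hsnd ⟨_, hd₂, rfl⟩, hd₂⟩

end simulation

section prodRel

variable {X₁ X₂ X₁' X₂' : Type} [AddCommGroup X₁] [Module ℝ X₁] [AddCommGroup X₂] [Module ℝ X₂]
  [AddCommGroup X₁'] [Module ℝ X₁'] [AddCommGroup X₂'] [Module ℝ X₂']

def prodRel (S₁ : Submodule ℝ (X₁ × X₁')) (S₂ : Submodule ℝ (X₂ × X₂')) :
    Submodule ℝ ((X₁ × X₂) × (X₁' × X₂')) :=
  (S₁.prod S₂).comap (LinearEquiv.prodProdProdComm ℝ X₁ X₂ X₁' X₂').toLinearMap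

lemma map_fst_prodRel_inf_comap_fst {S₁ : Submodule ℝ (X₁ × X₁')}
    {S₂ : Submodule ℝ (X₂ × X₂')} {U : Submodule ℝ (X₁ × X₂)}
    (hU : U ≤ (S₁.map (LinearMap.fst ℝ X₁ X₁')).prod (S₂.map (LinearMap.fst ℝ X₂ X₂'))) :
    (prodRel S₁ S₂ ⊓ U.comap (LinearMap.fst ℝ _ _)).map (LinearMap.fst ℝ _ _) = U := by
  refine le_antisymm (fun _ ⟨_, ⟨_, hp⟩, hpx⟩ => hpx ▸ hp) fun x hx => ?_
  obtain ⟨⟨⟨_, x₁'⟩, hx₁, rfl⟩, ⟨⟨_, x₂'⟩, hx₂, rfl⟩⟩ := hU hx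
  exact ⟨((_, _), (x₁', x₂')), ⟨⟨hx₁, hx₂⟩, hx⟩, rfl⟩

end prodRel

section compSimulation

variable {W : Type} [AddCommGroup W] [Module ℝ W]
  {X₁ D₁ Y₁ X₂ D₂ Y₂ X₁' D₁' Y₁' X₂' D₂' Y₂' : Type}
  [AddCommGroup X₁] [Module ℝ X₁] [AddCommGroup D₁] [Module ℝ D₁]
  [AddCommGroup Y₁] [Module ℝ Y₁]
  [AddCommGroup X₂] [Module ℝ X₂] [AddCommGroup D₂] [Module ℝ D₂]
  [AddCommGroup Y₂] [Module ℝ Y₂]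
  [AddCommGroup X₁'] [Module ℝ X₁'] [AddCommGroup D₁'] [Module ℝ D₁']
  [AddCommGroup Y₁'] [Module ℝ Y₁']
  [AddCommGroup X₂'] [Module ℝ X₂'] [AddCommGroup D₂'] [Module ℝ D₂']
  [AddCommGroup Y₂'] [Module ℝ Y₂']
  {P₁ : DVSystem X₁ W D₁ Y₁} {P₂ : DVSystem X₂ W D₂ Y₂}
  {P₁' : DVSystem X₁' W D₁' Y₁'} {P₂' : DVSystem X₂' W D₂' Y₂'}
  {S₁ : Submodule ℝ (X₁ × X₁')} {S₂ : Submodule ℝ (X₂ × X₂')}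

lemma exists_step_comp (hS₁ : SimConds P₁ P₁' S₁) (hS₂ : SimConds P₂ P₂' S₂)
    {x : X₁ × X₂} {x' : X₁' × X₂'} (hx : (x, x') ∈ prodRel S₁ S₂) {d : D₁ × D₂}
    (hd : (comp P₁ P₂).A x + (comp P₁ P₂).G d ∈ (comp P₁ P₂).V) :
    ∃ d', ((comp P₁ P₂).A x + (comp P₁ P₂).G d, (comp P₁' P₂').A x' + (comp P₁' P₂').G d') ∈
      prodRel S₁ S₂ := by
  obtain ⟨hd₁, hd₂⟩ := V_comp_le_prod P₁ P₂ hd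
  obtain ⟨d₁', -, hS₁'⟩ := (hS₁ _ _ hx.1).1 d.1 hd₁
  obtain ⟨d₂', -, hS₂'⟩ := (hS₂ _ _ hx.2).1 d.2 hd₂
  exact ⟨(d₁', d₂'), hS₁', hS₂'⟩

lemma C_comp_eq_of_mem_prodRel (hS₁ : SimConds P₁ P₁' S₁) (hS₂ : SimConds P₂ P₂' S₂)
    {p : (X₁ × X₂) × (X₁' × X₂')} (hp : p ∈ prodRel S₁ S₂) :
    (comp P₁ P₂).C p.1 = (comp P₁' P₂').C p.2 := by
  simp only [comp_C_apply, (hS₁ _ _ hp.1).2, (hS₂ _ _ hp.2).2]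

lemma H_comp_eq_zero_of_mem_prodRel (hS₁ : IsSimRel P₁ P₁' S₁) (hS₂ : IsSimRel P₂ P₂' S₂)
    {p : (X₁ × X₂) × (X₁' × X₂')} (hp : p ∈ prodRel S₁ S₂) (hpV : p.1 ∈ (comp P₁ P₂).V) :
    (comp P₁' P₂').H p.2 = 0 := by
  have hC : P₁'.C p.2.1 = P₂'.C p.2.2 := by
    rw [← (hS₁.2.2 _ _ hp.1).2, ← (hS₂.2.2 _ _ hp.2).2]
    exact C_fst_eq_C_snd_of_mem_V_comp P₁ P₂ hpV
  have hH₁ : P₁'.H p.2.1 = 0 := H_eq_zero_of_mem_V _ (hS₁.2.1 ⟨_, hp.1, rfl⟩)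
  have hH₂ : P₂'.H p.2.2 = 0 := H_eq_zero_of_mem_V _ (hS₂.2.1 ⟨_, hp.2, rfl⟩)
  simp [hH₁, hH₂, hC]

end compSimulation

end DVSystem

open DVSystem

theorem comp_simulates_comp_general {W : Type} [AddCommGroup W] [Module ℝ W]
    {X₁ D₁ Y₁ : Type} [AddCommGroup X₁] [Module ℝ X₁]
    [AddCommGroup D₁] [Module ℝ D₁]
    [AddCommGroup Y₁] [Module ℝ Y₁]
    {X₂ D₂ Y₂ : Type} [AddCommGroup X₂] [Module ℝ X₂]
    [AddCommGroup D₂] [Module ℝ D₂]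
    [AddCommGroup Y₂] [Module ℝ Y₂]
    {X₁' D₁' Y₁' : Type} [AddCommGroup X₁'] [Module ℝ X₁']
    [AddCommGroup D₁'] [Module ℝ D₁']
    [AddCommGroup Y₁'] [Module ℝ Y₁']
    {X₂' D₂' Y₂' : Type} [AddCommGroup X₂'] [Module ℝ X₂']
    [AddCommGroup D₂'] [Module ℝ D₂']
    [AddCommGroup Y₂'] [Module ℝ Y₂']
    (P₁ : DVSystem X₁ W D₁ Y₁) (P₂ : DVSystem X₂ W D₂ Y₂)
    (P₁' : DVSystem X₁' W D₁' Y₁') (P₂' : DVSystem X₂' W D₂' Y₂')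
    (h₁ : Simulates P₁ P₁') (h₂ : Simulates P₂ P₂') :
    Simulates (comp P₁ P₂) (comp P₁' P₂') := by
  obtain ⟨S₁, hS₁, hS₁_full⟩ := h₁
  obtain ⟨S₂, hS₂, hS₂_full⟩ := h₂
  have hV : (comp P₁ P₂).V ≤
      (S₁.map (LinearMap.fst ℝ _ _)).prod (S₂.map (LinearMap.fst ℝ _ _)) := by
    rw [hS₁_full, hS₂_full]
    exact V_comp_le_prod P₁ P₂
  have hS_full := map_fst_prodRel_inf_comap_fst hV
  refine ⟨_, isSimRel_of_exists_step _ _ hS_full.le ?_ ?_ ?_, hS_full⟩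
  · exact fun p hp => H_comp_eq_zero_of_mem_prodRel hS₁ hS₂ hp.1 hp.2
  · rintro x x' ⟨hx, -⟩ d hd
    obtain ⟨d', hd'⟩ := exists_step_comp hS₁.2.2 hS₂.2.2 hx hd
    exact ⟨d', hd', hd⟩
  · exact fun p hp => C_comp_eq_of_mem_prodRel hS₁.2.2 hS₂.2.2 hp.1

/-- Simulation is preserved under system composition. -/
theorem comp_simulates_comp {W : Type} [AddCommGroup W] [Module ℝ W] [FiniteDimensional ℝ W]
    {X₁ D₁ Y₁ : Type} [AddCommGroup X₁] [Module ℝ X₁] [FiniteDimensional ℝ X₁]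
    [AddCommGroup D₁] [Module ℝ D₁] [FiniteDimensional ℝ D₁]
    [AddCommGroup Y₁] [Module ℝ Y₁] [FiniteDimensional ℝ Y₁]
    {X₂ D₂ Y₂ : Type} [AddCommGroup X₂] [Module ℝ X₂] [FiniteDimensional ℝ X₂]
    [AddCommGroup D₂] [Module ℝ D₂] [FiniteDimensional ℝ D₂]
    [AddCommGroup Y₂] [Module ℝ Y₂] [FiniteDimensional ℝ Y₂]
    {X₁' D₁' Y₁' : Type} [AddCommGroup X₁'] [Module ℝ X₁'] [FiniteDimensional ℝ X₁']
    [AddCommGroup D₁'] [Module ℝ D₁'] [FiniteDimensional ℝ D₁']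
    [AddCommGroup Y₁'] [Module ℝ Y₁'] [FiniteDimensional ℝ Y₁']
    {X₂' D₂' Y₂' : Type} [AddCommGroup X₂'] [Module ℝ X₂'] [FiniteDimensional ℝ X₂']
    [AddCommGroup D₂'] [Module ℝ D₂'] [FiniteDimensional ℝ D₂']
    [AddCommGroup Y₂'] [Module ℝ Y₂'] [FiniteDimensional ℝ Y₂']
    (P₁ : DVSystem X₁ W D₁ Y₁) (P₂ : DVSystem X₂ W D₂ Y₂)
    (P₁' : DVSystem X₁' W D₁' Y₁') (P₂' : DVSystem X₂' W D₂' Y₂')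
    (h₁ : Simulates P₁ P₁') (h₂ : Simulates P₂ P₂') :
    Simulates (comp P₁ P₂) (comp P₁' P₂') :=
  comp_simulates_comp_general P₁ P₂ P₁' P₂' h₁ h₂
end

section
/- In the vehicle-following example, the consistent subspace of the composition A ∘ Σ equals the diagonal: with assumptions A given on ℝ⁴ by A^a(s₁, v₁, s₂, v₂) = (v₁, 0, 0, 0), G^a : ℝ³ → ℝ⁴, G^a(d₁, d₂, d₃) = (0, d₁, d₂, d₃), C^a = I, H^a = 0, and system Σ given on ℝ⁴ (for parameters h, k > 0) by A(s₁, v₁, s₂, v₂) = (0, 0, v₂, kh⁻¹s₁ + h⁻¹v₁ − kh⁻¹s₂ − (k + h⁻¹)v₂), G : ℝ² → ℝ⁴, G(d₁, d₂) = (d₁, d₂, 0, 0), C = I, H = 0, the consistent subspace of A ∘ Σ is V∘,* = {(x^a, x) ∈ ℝ⁴ × ℝ⁴ : x^a = x}. -/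
open DVSystem

/-- The assumptions 𝒜 of the vehicle-following example: the lead vehicle satisfies
the kinematic relation `ṡ₁ = v₁`; the remaining variables are unconstrained. -/
noncomputable def vehAss : DVSystem (Fin 4 → ℝ) (Fin 4 → ℝ) (Fin 3 → ℝ) (Fin 1 → ℝ) where
  A := Matrix.toLin' !![0, 1, 0, 0; 0, 0, 0, 0; 0, 0, 0, 0; 0, 0, 0, 0]
  G := Matrix.toLin' !![0, 0, 0; 1, 0, 0; 0, 1, 0; 0, 0, 1]
  C := LinearMap.id
  H := 0

/-- The controlled follower vehicle Σ of the vehicle-following example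
(dynamics `ṡ₂ = v₂`, `v̇₂ = h⁻¹(v₁ − v₂) + k h⁻¹(s₁ − s₂ − h v₂)`). -/
noncomputable def vehSys (h k : ℝ) : DVSystem (Fin 4 → ℝ) (Fin 4 → ℝ) (Fin 2 → ℝ) (Fin 1 → ℝ) where
  A := Matrix.toLin' !![0, 0, 0, 0; 0, 0, 0, 0; 0, 0, 0, 1;
        k * h⁻¹, h⁻¹, -(k * h⁻¹), -(k + h⁻¹)]
  G := Matrix.toLin' !![1, 0; 0, 1; 0, 0; 0, 0]
  C := LinearMap.id
  H := 0

/-! The consistent subspace of a composite is always contained in the kernel of its constraint map,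
which here is the diagonal because both systems output their full state and carry no other
constraint. The diagonal is also admissible: from `(y, y)` the two dynamics differ by
`A^a y - A y`, and this difference can be absorbed by the driving variables, since the images of
`G^a` and `G` together span `ℝ⁴`. -/

namespace DVSystem

section consistent

variable {X W D Y : Type}
  [AddCommGroup X] [Module ℝ X] [AddCommGroup W] [Module ℝ W]
  [AddCommGroup D] [Module ℝ D] [AddCommGroup Y] [Module ℝ Y]

theorem V_le_ker_H (P : DVSystem X W D Y) : P.V ≤ LinearMap.ker P.H :=
  sSup_le fun _ hU => hU.2

theorem le_V_of_admissible {P : DVSystem X W D Y} {U : Submodule ℝ X} (hU : P.Admissible U) :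
    U ≤ P.V :=
  le_sSup hU

theorem V_eq_ker_H_of_admissible {P : DVSystem X W D Y}
    (h : P.Admissible (LinearMap.ker P.H)) : P.V = LinearMap.ker P.H :=
  le_antisymm P.V_le_ker_H (le_V_of_admissible h)

end consistent

section comp

variable {X W : Type} [AddCommGroup X] [Module ℝ X] [AddCommGroup W] [Module ℝ W]
variable {D₁ Y₁ D₂ Y₂ : Type}
  [AddCommGroup D₁] [Module ℝ D₁] [AddCommGroup Y₁] [Module ℝ Y₁]
  [AddCommGroup D₂] [Module ℝ D₂] [AddCommGroup Y₂] [Module ℝ Y₂]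

theorem mem_ker_comp_H {X₁ X₂ : Type} [AddCommGroup X₁] [Module ℝ X₁] [AddCommGroup X₂]
    [Module ℝ X₂] (P₁ : DVSystem X₁ W D₁ Y₁) (P₂ : DVSystem X₂ W D₂ Y₂) (x₁ : X₁) (x₂ : X₂) :
    (x₁, x₂) ∈ LinearMap.ker (comp P₁ P₂).H ↔ P₁.H x₁ = 0 ∧ P₂.H x₂ = 0 ∧ P₁.C x₁ = P₂.C x₂ := by
  simp [comp, sub_eq_zero]

theorem ker_comp_H_eq_graph_id {P₁ : DVSystem X X D₁ Y₁} {P₂ : DVSystem X X D₂ Y₂}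
    (hC₁ : P₁.C = LinearMap.id) (hC₂ : P₂.C = LinearMap.id) (hH₁ : P₁.H = 0) (hH₂ : P₂.H = 0) :
    LinearMap.ker (comp P₁ P₂).H = LinearMap.graph (LinearMap.id : X →ₗ[ℝ] X) := by
  ext ⟨x₁, x₂⟩
  rw [mem_ker_comp_H, LinearMap.mem_graph_iff]
  simp [hC₁, hC₂, hH₁, hH₂, eq_comm]

theorem map_graph_id_le_sup_range_G {P₁ : DVSystem X W D₁ Y₁} {P₂ : DVSystem X W D₂ Y₂}
    (hA : ∀ y, P₁.A y - P₂.A y ∈ LinearMap.range P₁.G ⊔ LinearMap.range P₂.G) :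
    (LinearMap.graph (LinearMap.id : X →ₗ[ℝ] X)).map (comp P₁ P₂).A ≤
      LinearMap.graph LinearMap.id ⊔ LinearMap.range (comp P₁ P₂).G := by
  rintro _ ⟨⟨x, y⟩, hy, rfl⟩
  change y = x at hy
  subst hy
  obtain ⟨_, ⟨d₁, rfl⟩, _, ⟨d₂, rfl⟩, hd⟩ := Submodule.mem_sup.1 (hA y)
  -- `A₁ y - G₁ d₁ = A₂ y + G₂ d₂` is the common diagonal part.
  refine Submodule.mem_sup.2 ⟨(P₁.A y - P₁.G d₁, P₁.A y - P₁.G d₁), rfl,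
    (P₁.G d₁, P₂.G (-d₂)), ⟨(d₁, -d₂), rfl⟩, ?_⟩
  ext
  · simp [comp]
  · simp only [comp, LinearMap.prodMap_apply, Prod.snd_add, map_neg]
    rw [← sub_eq_add_neg, sub_sub, hd, sub_sub_cancel]

end comp

end DVSystem

theorem range_vehAss_G_sup_range_vehSys_G (h k : ℝ) :
    LinearMap.range vehAss.G ⊔ LinearMap.range (vehSys h k).G = ⊤ := by
  refine Submodule.eq_top_iff'.2 fun x => Submodule.mem_sup.2
    ⟨_, ⟨![x 1, x 2, x 3], rfl⟩, _, ⟨![x 0, 0], rfl⟩, ?_⟩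
  ext i
  fin_cases i <;> simp [vehAss, vehSys]

theorem veh_comp_consistent_eq_diagonal_general (h k : ℝ) :
    (comp vehAss (vehSys h k)).V =
      LinearMap.graph (LinearMap.id : (Fin 4 → ℝ) →ₗ[ℝ] Fin 4 → ℝ) := by
  have hker := ker_comp_H_eq_graph_id (P₁ := vehAss) (P₂ := vehSys h k) rfl rfl rfl rfl
  rw [← hker]
  refine V_eq_ker_H_of_admissible ⟨?_, le_rfl⟩
  rw [hker]
  refine map_graph_id_le_sup_range_G fun y => ?_
  rw [range_vehAss_G_sup_range_vehSys_G]
  exact Submodule.mem_top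

/-- In the vehicle-following example, the consistent subspace of `𝒜 ∘ Σ` is the
diagonal `{(x^a, x) | x^a = x}`. -/
theorem veh_comp_consistent_eq_diagonal (h k : ℝ) (hh : 0 < h) (hk : 0 < k) :
    (comp vehAss (vehSys h k)).V =
      LinearMap.graph (LinearMap.id : (Fin 4 → ℝ) →ₗ[ℝ] Fin 4 → ℝ) :=
  veh_comp_consistent_eq_diagonal_general h k
end
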